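/- Let S be a subset of the Fibonacci numbers with asymptotic density q(S), and Z_n = #(A_n(p) ∩ S). Then Var(Z_n) = o(n²). -/

import Mathlib

/-!
Write `X_k = indIncl k` for the indicator that `F_{k+1}` is selected. Coin `k + 1` selects
`F_{k+2}` with probability `p` exactly when `F_{k+1}` was not selected, so for every function `f`
of the first `k + 1` coins, `E[f X_{k+1}] = p E[f (1 - X_k)]`, i.e. `Cov(f, X_{k+1}) = -p Cov(f, X_k)`.
Hence `|Cov(X_a, X_b)| ≤ p^|a-b|`, and summing over pairs gives `Var(Z_n) ≤ 2n / (1 - p)`.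
-/

open Finset

noncomputable section

def Fib (n : ℕ) : ℕ := Nat.fib (n + 1)

/-- `included c k` : whether `F_{k+1}` is included in the random Zeckendorf process,
given coins `c` (`c k` is the coin for step `k+1`): a Fibonacci number is included
with probability `p` when the previous one was not included, and is excluded otherwise. -/
def included (c : ℕ → Bool) : ℕ → Bool
  | 0 => c 0
  | k + 1 => !included c k && c (k + 1)

/-- Extend a finite coin sequence by `false`. -/
def ext (n : ℕ) (c : Fin n → Bool) : ℕ → Bool :=
  fun j => if h : j < n then c ⟨j, h⟩ else false

/-- Probability weight of a finite coin sequence, each coin heads with probability `p`. -/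
def wt (p : ℝ) {n : ℕ} (c : Fin n → Bool) : ℝ :=
  ∏ i, if c i then p else 1 - p

open Classical in
/-- Probability of an event depending on the first `n` coins. -/
def finProb (p : ℝ) (n : ℕ) (E : (ℕ → Bool) → Prop) : ℝ :=
  ∑ c : Fin n → Bool, if E (ext n c) then wt p c else 0

/-- `Prob (F_k ∈ A(p))` for `k ≥ 1`. -/
def probIncl (p : ℝ) (k : ℕ) : ℝ :=
  finProb p k (fun c => included c (k - 1) = true)

/-- Expected value of a function of the first `n` coins. -/
def expVal (p : ℝ) (n : ℕ) (f : (ℕ → Bool) → ℝ) : ℝ :=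
  ∑ c : Fin n → Bool, wt p c * f (ext n c)

/-- `W_n` : the number of selected indices among `1,...,n`. -/
def countIn (n : ℕ) (c : ℕ → Bool) : ℕ :=
  ((Icc 1 n).filter (fun j => included c (j - 1) = true)).card

section CoinSequences

lemma Fin.sum_pi_succ_snoc {M α : Type*} [AddCommMonoid M] [Fintype α] {n : ℕ}
    (F : (Fin (n + 1) → α) → M) : ∑ c, F c = ∑ c : Fin n → α, ∑ a, F (Fin.snoc c a) := by
  rw [← (Fin.snocEquiv fun _ => α).sum_comp F, Fintype.sum_prod_type_right]
  rfl

lemma wt_snoc (p : ℝ) {n : ℕ} (c : Fin n → Bool) (b : Bool) :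
    wt p (Fin.snoc c b) = wt p c * (if b then p else 1 - p) := by
  simp [wt, Fin.prod_univ_castSucc]

lemma ext_snoc_of_lt {n : ℕ} (c : Fin n → Bool) (b : Bool) {j : ℕ} (h : j < n) :
    ext (n + 1) (Fin.snoc c b) j = ext n c j := by
  simp [_root_.ext, Fin.snoc, h, Nat.lt_succ_of_lt h]

lemma ext_snoc_self {n : ℕ} (c : Fin n → Bool) (b : Bool) :
    ext (n + 1) (Fin.snoc c b) n = b := by
  simp [_root_.ext, Fin.snoc]

lemma dependsOn_included (k : ℕ) : DependsOn (included · k) (Set.Iio (k + 1)) := by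
  intro c c' h
  induction k with
  | zero => simp [included, h 0 (by simp)]
  | succ k ih =>
    simp only [included, ih fun i hi => h i (Set.mem_Iio.2 (Nat.lt_succ_of_lt (Set.mem_Iio.1 hi))),
      h (k + 1) (by simp)]

end CoinSequences

section ExpectedValue

variable {p : ℝ} {n : ℕ}

lemma sum_wt (p : ℝ) (n : ℕ) : ∑ c : Fin n → Bool, wt p c = 1 := by
  simp only [wt]
  rw [← Fintype.prod_sum (κ := fun _ => Bool) fun _ b => if b then p else 1 - p]
  simp

lemma expVal_const (r : ℝ) : expVal p n (fun _ => r) = r := by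
  rw [expVal, ← sum_mul, sum_wt, one_mul]

lemma expVal_sub (f g : (ℕ → Bool) → ℝ) :
    expVal p n (fun c => f c - g c) = expVal p n f - expVal p n g := by
  simp [expVal, mul_sub, sum_sub_distrib]

lemma expVal_const_mul (r : ℝ) (f : (ℕ → Bool) → ℝ) :
    expVal p n (fun c => r * f c) = r * expVal p n f := by
  simp only [expVal, mul_sum, mul_left_comm]

lemma expVal_sum {ι : Type*} (s : Finset ι) (F : ι → (ℕ → Bool) → ℝ) :
    expVal p n (fun c => ∑ j ∈ s, F j c) = ∑ j ∈ s, expVal p n (F j) := by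
  simp only [expVal, mul_sum]
  exact sum_comm

lemma wt_nonneg (hp0 : 0 ≤ p) (hp1 : p ≤ 1) (c : Fin n → Bool) : 0 ≤ wt p c :=
  prod_nonneg fun i _ => by split <;> linarith

lemma expVal_nonneg (hp0 : 0 ≤ p) (hp1 : p ≤ 1) {f : (ℕ → Bool) → ℝ} (hf : ∀ c, 0 ≤ f c) :
    0 ≤ expVal p n f :=
  sum_nonneg fun c _ => mul_nonneg (wt_nonneg hp0 hp1 c) (hf _)

lemma expVal_mono (hp0 : 0 ≤ p) (hp1 : p ≤ 1) {f g : (ℕ → Bool) → ℝ} (hfg : ∀ c, f c ≤ g c) :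
    expVal p n f ≤ expVal p n g :=
  sum_le_sum fun c _ => mul_le_mul_of_nonneg_left (hfg _) (wt_nonneg hp0 hp1 c)

lemma expVal_succ (f : (ℕ → Bool) → ℝ) :
    expVal p (n + 1) f = ∑ c : Fin n → Bool,
      wt p c * ((1 - p) * f (ext (n + 1) (Fin.snoc c false))
        + p * f (ext (n + 1) (Fin.snoc c true))) := by
  rw [expVal, Fin.sum_pi_succ_snoc]
  refine sum_congr rfl fun c _ => ?_
  simp only [Fintype.sum_bool, wt_snoc, Bool.false_eq_true, if_false, if_true]
  ring

lemma expVal_eq_of_dependsOn {m : ℕ} {f : (ℕ → Bool) → ℝ} (hf : DependsOn f (Set.Iio m))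
    (hmn : m ≤ n) : expVal p n f = expVal p m f := by
  induction n, hmn using Nat.le_induction with
  | base => rfl
  | succ n hmn ih =>
    have hsnoc (c : Fin n → Bool) (b : Bool) : f (ext (n + 1) (Fin.snoc c b)) = f (ext n c) :=
      hf fun i hi => ext_snoc_of_lt c b ((Set.mem_Iio.1 hi).trans_le hmn)
    rw [expVal_succ, ← ih, expVal]
    exact sum_congr rfl fun c _ => by rw [hsnoc, hsnoc]; ring

end ExpectedValue

section Covariance

variable {p : ℝ} {n : ℕ}

def expCov (p : ℝ) (n : ℕ) (f g : (ℕ → Bool) → ℝ) : ℝ :=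
  expVal p n (fun c => f c * g c) - expVal p n f * expVal p n g

lemma expCov_comm (f g : (ℕ → Bool) → ℝ) : expCov p n f g = expCov p n g f := by
  simp only [expCov, mul_comm]

lemma expVal_sq_sub_expVal (f : (ℕ → Bool) → ℝ) :
    expVal p n (fun c => (f c - expVal p n f) ^ 2) = expCov p n f f := by
  have hsq (c : ℕ → Bool) : (f c - expVal p n f) ^ 2
      = f c * f c - (2 * expVal p n f * f c - expVal p n f ^ 2) := by ring
  simp only [hsq, expVal_sub, expVal_const_mul, expVal_const, expCov]
  ring

lemma expCov_sum_sum {ι : Type*} (s : Finset ι) (F : ι → (ℕ → Bool) → ℝ) :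
    expCov p n (fun c => ∑ i ∈ s, F i c) (fun c => ∑ j ∈ s, F j c)
      = ∑ i ∈ s, ∑ j ∈ s, expCov p n (F i) (F j) := by
  simp only [expCov, sum_mul_sum, expVal_sum, ← sum_sub_distrib]

end Covariance

section Inclusion

variable {p : ℝ} {n : ℕ}

def indIncl (k : ℕ) (c : ℕ → Bool) : ℝ := if included c k then 1 else 0

lemma dependsOn_indIncl (k : ℕ) : DependsOn (indIncl k) (Set.Iio (k + 1)) :=
  fun _ _ h => by simp only [indIncl, dependsOn_included k h]

lemma indIncl_nonneg (k : ℕ) (c : ℕ → Bool) : 0 ≤ indIncl k c := by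
  unfold indIncl; split <;> simp

lemma indIncl_le_one (k : ℕ) (c : ℕ → Bool) : indIncl k c ≤ 1 := by
  unfold indIncl; split <;> simp

lemma indIncl_mul_self (k : ℕ) (c : ℕ → Bool) : indIncl k c * indIncl k c = indIncl k c := by
  unfold indIncl; split <;> simp

lemma indIncl_succ_ext_snoc {k : ℕ} (c : Fin (k + 1) → Bool) (b : Bool) :
    indIncl (k + 1) (ext (k + 2) (Fin.snoc c b))
      = if b then 1 - indIncl k (ext (k + 1) c) else 0 := by
  have hk : included (ext (k + 2) (Fin.snoc c b)) k = included (ext (k + 1) c) k :=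
    dependsOn_included k fun i hi => ext_snoc_of_lt c b (Set.mem_Iio.1 hi)
  cases b <;> cases h : included (ext (k + 1) c) k <;>
    simp [indIncl, included, hk, h, ext_snoc_self]

lemma expVal_mul_indIncl_succ {f : (ℕ → Bool) → ℝ} {k : ℕ} (hf : DependsOn f (Set.Iio (k + 1)))
    (hkn : k + 1 < n) :
    expVal p n (fun c => f c * indIncl (k + 1) c)
      = p * expVal p n (fun c => f c * (1 - indIncl k c)) := by
  have hdep₁ : DependsOn (fun c => f c * indIncl (k + 1) c) (Set.Iio (k + 2)) := fun c c' h => by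
    dsimp only
    rw [hf fun i hi => h i (Set.mem_Iio.2 ((Set.mem_Iio.1 hi).trans (by omega))),
      dependsOn_indIncl (k + 1) h]
  have hdep₂ : DependsOn (fun c => f c * (1 - indIncl k c)) (Set.Iio (k + 1)) := fun c c' h => by
    dsimp only
    rw [hf h, dependsOn_indIncl k h]
  rw [expVal_eq_of_dependsOn hdep₁ hkn, expVal_eq_of_dependsOn hdep₂ hkn.le, expVal_succ, expVal,
    mul_sum]
  refine sum_congr rfl fun c _ => ?_
  have hf' (b : Bool) : f (ext (k + 2) (Fin.snoc c b)) = f (ext (k + 1) c) :=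
    hf fun i hi => ext_snoc_of_lt c b (Set.mem_Iio.1 hi)
  simp only [indIncl_succ_ext_snoc, hf', if_true, Bool.false_eq_true, if_false]
  ring

lemma expCov_indIncl_succ {f : (ℕ → Bool) → ℝ} {k : ℕ} (hf : DependsOn f (Set.Iio (k + 1)))
    (hkn : k + 1 < n) :
    expCov p n f (indIncl (k + 1)) = -p * expCov p n f (indIncl k) := by
  have hone := expVal_mul_indIncl_succ (p := p) ((dependsOn_const (1 : ℝ)).mono
    (Set.empty_subset (Set.Iio (k + 1)))) hkn
  simp only [expCov, expVal_mul_indIncl_succ hf hkn, one_mul, mul_one_sub, expVal_sub,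
    expVal_const] at hone ⊢
  rw [hone]
  ring

lemma abs_expCov_indIncl_self_le_one (hp0 : 0 ≤ p) (hp1 : p ≤ 1) (k : ℕ) :
    |expCov p n (indIncl k) (indIncl k)| ≤ 1 := by
  have h0 : 0 ≤ expVal p n (indIncl k) := expVal_nonneg hp0 hp1 (indIncl_nonneg k)
  have h1 : expVal p n (indIncl k) ≤ 1 :=
    (expVal_mono hp0 hp1 (indIncl_le_one k)).trans_eq (expVal_const 1)
  simp only [expCov, indIncl_mul_self]
  rw [abs_le]
  constructor <;> nlinarith

lemma abs_expCov_indIncl_le (hp0 : 0 ≤ p) (hp1 : p ≤ 1) {a b : ℕ} (ha : a < n) (hb : b < n) :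
    |expCov p n (indIncl a) (indIncl b)| ≤ p ^ Nat.dist a b := by
  wlog hab : a ≤ b generalizing a b
  · rw [expCov_comm, Nat.dist_comm]
    exact this hb ha (by omega)
  obtain ⟨d, rfl⟩ := Nat.exists_eq_add_of_le hab
  rw [Nat.dist_eq_sub_of_le hab, Nat.add_sub_cancel_left]
  clear hab
  induction d with
  | zero => simpa using abs_expCov_indIncl_self_le_one hp0 hp1 a
  | succ d ih =>
    rw [← add_assoc, expCov_indIncl_succ ((dependsOn_indIncl a).mono
      (Set.Iio_subset_Iio (by omega))) (by omega), abs_mul, abs_neg, abs_of_nonneg hp0, pow_succ']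
    exact mul_le_mul_of_nonneg_left (ih (by omega)) hp0

end Inclusion

section Geometric

variable {p : ℝ} {ι : Type*}

lemma sum_pow_le_of_injOn (hp0 : 0 ≤ p) (hp1 : p < 1) {s : Finset ι} {g : ι → ℕ}
    (hg : Set.InjOn g s) : ∑ j ∈ s, p ^ g j ≤ (1 - p)⁻¹ := by
  rw [← sum_image hg, ← tsum_geometric_of_lt_one hp0 hp1]
  exact (summable_geometric_of_lt_one hp0 hp1).sum_le_tsum _ fun d _ => pow_nonneg hp0 d

lemma sum_pow_dist_le (hp0 : 0 ≤ p) (hp1 : p < 1) {s : Finset ι} {g : ι → ℕ}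
    (hg : Set.InjOn g s) (i : ℕ) : ∑ j ∈ s, p ^ Nat.dist i (g j) ≤ 2 * (1 - p)⁻¹ := by
  rw [← sum_filter_add_sum_filter_not s (fun j => g j ≤ i), two_mul]
  refine add_le_add (sum_pow_le_of_injOn hp0 hp1 ?_) (sum_pow_le_of_injOn hp0 hp1 ?_) <;>
  · intro x hx y hy hxy
    simp only [mem_coe, mem_filter] at hx hy
    refine hg hx.1 hy.1 ?_
    simp only [Nat.dist] at hxy
    omega

end Geometric

lemma expVal_sq_sub_sum_indIncl_le {p : ℝ} {n : ℕ} {ι : Type*} (hp0 : 0 ≤ p) (hp1 : p < 1)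
    {s : Finset ι} {g : ι → ℕ} (hg : Set.InjOn g s) (hgn : ∀ j ∈ s, g j < n) :
    expVal p n (fun c => (∑ j ∈ s, indIncl (g j) c
      - expVal p n (fun c => ∑ j ∈ s, indIncl (g j) c)) ^ 2) ≤ #s * (2 * (1 - p)⁻¹) := by
  rw [expVal_sq_sub_expVal, expCov_sum_sum]
  calc ∑ i ∈ s, ∑ j ∈ s, expCov p n (indIncl (g i)) (indIncl (g j))
      ≤ ∑ i ∈ s, ∑ j ∈ s, p ^ Nat.dist (g i) (g j) :=
        sum_le_sum fun i hi => sum_le_sum fun j hj => (le_abs_self _).trans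
          (abs_expCov_indIncl_le hp0 hp1.le (hgn i hi) (hgn j hj))
    _ ≤ ∑ _i ∈ s, 2 * (1 - p)⁻¹ := sum_le_sum fun i _ => sum_pow_dist_le hp0 hp1 hg _
    _ = #s * (2 * (1 - p)⁻¹) := by rw [sum_const, nsmul_eq_mul]

open Classical in
theorem variance_count_in_S_general (p : ℝ) (hp0 : 0 < p) (hp1 : p < 1)
    (S : Set ℕ) :
    Filter.Tendsto
      (fun n : ℕ =>
        expVal p n (fun c =>
          ((((Finset.Icc 1 n).filter
              (fun j => Fib j ∈ S ∧ included c (j - 1) = true)).card : ℝ)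
            - expVal p n (fun c' =>
                (((Finset.Icc 1 n).filter
                  (fun j => Fib j ∈ S ∧ included c' (j - 1) = true)).card : ℝ))) ^ 2)
          / (n : ℝ) ^ 2)
      Filter.atTop (nhds 0) := by
  have hcount (n : ℕ) (c : ℕ → Bool) :
      (((Icc 1 n).filter (fun j => Fib j ∈ S ∧ included c (j - 1) = true)).card : ℝ)
        = ∑ j ∈ (Icc 1 n).filter (fun j => Fib j ∈ S), indIncl (j - 1) c := by
    rw [card_filter, sum_filter, Nat.cast_sum]
    refine sum_congr rfl fun j _ => ?_
    simp only [indIncl, ite_and, Nat.cast_ite, Nat.cast_one, Nat.cast_zero]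
  refine squeeze_zero' (.of_forall fun n => div_nonneg ?_ (by positivity)) ?_
    (tendsto_const_div_atTop_nhds_zero_nat (2 * (1 - p)⁻¹))
  · exact expVal_nonneg hp0.le hp1.le fun c => sq_nonneg _
  filter_upwards [Filter.eventually_ge_atTop 1] with n hn
  have hvar := expVal_sq_sub_sum_indIncl_le (n := n) hp0.le hp1
    (s := (Icc 1 n).filter (fun j => Fib j ∈ S)) (g := (· - 1))
    (fun i hi j hj h => by simp only [mem_coe, mem_filter, mem_Icc] at hi hj h; omega)
    (fun j hj => by simp only [mem_filter, mem_Icc] at hj; omega)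
  have hcard : (#((Icc 1 n).filter (fun j => Fib j ∈ S)) : ℝ) ≤ n := by
    exact_mod_cast (card_filter_le _ _).trans (by simp)
  simp only [hcount]
  have hK : (0 : ℝ) ≤ 2 * (1 - p)⁻¹ := by have := sub_pos.2 hp1; positivity
  rw [div_le_div_iff₀ (by positivity) (by positivity)]
  calc _ ≤ #((Icc 1 n).filter (fun j => Fib j ∈ S)) * (2 * (1 - p)⁻¹) * n := by gcongr
    _ ≤ n * (2 * (1 - p)⁻¹) * n := by gcongr
    _ = 2 * (1 - p)⁻¹ * n ^ 2 := by ring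

open Classical in
/-- Let `S` be a subset of the Fibonacci numbers with asymptotic density `q(S)`, and
`Z_n = #(A_n(p) ∩ S)`. Then `Var(Z_n) = o(n²)`. -/
theorem variance_count_in_S (p : ℝ) (hp0 : 0 < p) (hp1 : p < 1)
    (S : Set ℕ) (q : ℝ)
    (hq : Filter.Tendsto
      (fun n : ℕ => (((Finset.Icc 1 n).filter (fun i => Fib i ∈ S)).card : ℝ) / n)
      Filter.atTop (nhds q)) :
    Filter.Tendsto
      (fun n : ℕ =>
        expVal p n (fun c =>
          ((((Finset.Icc 1 n).filter
              (fun j => Fib j ∈ S ∧ included c (j - 1) = true)).card : ℝ)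
            - expVal p n (fun c' =>
                (((Finset.Icc 1 n).filter
                  (fun j => Fib j ∈ S ∧ included c' (j - 1) = true)).card : ℝ))) ^ 2)
          / (n : ℝ) ^ 2)
      Filter.atTop (nhds 0) :=
  variance_count_in_S_general p hp0 hp1 S

end
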